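/- Assume f is L-Lipschitz and β-smooth (no convexity is assumed). For each s let P̂^s = P^s + η_s β I_m, where I_m is the m × m identity matrix. Then the r-th local model of time-varying D-SGD satisfies, for every z ∈ 𝒵, |f(w^{T+1}(r); z) − f(v^{T+1}(r); z)| ≤ 2L² ∑_{t=1}^T (P̂^T P̂^{T−1} ⋯ P̂^{t+1})_{rr} η_t 𝟙[j_t(r)=k], where the empty matrix product (t = T) is the identity matrix. -/

import Mathlib

/-!
Write `δᵗ(i) = ‖wᵗ(i) - vᵗ(i)‖`. One D-SGD step is a gossip average followed by a gradient step, so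
by the triangle inequality and `β`-smoothness (or, on the one machine–sample pair where `S` and `S̃`
differ, the bound `‖∇f‖ ≤ L`)
`δᵗ⁺¹ ≤ P̂ᵗ δᵗ + 2 L ηₜ 𝟙[jₜ(r) = k] e_r` entrywise, with `P̂ᵗ = Pᵗ + ηₜ β I`.
Since every `P̂ᵗ` is entrywise nonnegative, this linear recursive inequality unrolls from `δ¹ = 0`
to `δᵀ⁺¹ ≤ ∑ₜ P̂ᵀ ⋯ P̂ᵗ⁺¹ (2 L ηₜ 𝟙[jₜ(r) = k] e_r)`, and the `L`-Lipschitz bound on `f` at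
machine `r` gives the result.
-/

/-- Backward matrix product `Q^{(t)} = P^T · P^{T-1} · ⋯ · P^{t+1}`
(the identity matrix when `t = T`). -/
noncomputable def backProd {m : ℕ} (P : ℕ → Matrix (Fin m) (Fin m) ℝ) (T t : ℕ) :
    Matrix (Fin m) (Fin m) ℝ :=
  (((List.range' (t + 1) (T - t)).reverse.map P).prod)

open Matrix Finset

lemma backProd_self {m : ℕ} (P : ℕ → Matrix (Fin m) (Fin m) ℝ) (t : ℕ) :
    backProd P t t = 1 := by
  simp [backProd]

lemma backProd_succ {m : ℕ} (P : ℕ → Matrix (Fin m) (Fin m) ℝ) {t s : ℕ} (h : s ≤ t) :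
    backProd P (t + 1) s = P (t + 1) * backProd P t s := by
  have hlen : t + 1 - s = t - s + 1 := by omega
  have hlast : s + 1 + 1 * (t - s) = t + 1 := by omega
  rw [backProd, backProd, hlen, List.range'_concat, hlast]
  simp [List.reverse_append]

lemma Matrix.mulVec_mono_of_nonneg {ι : Type*} [Fintype ι] {M : Matrix ι ι ℝ}
    (hM : ∀ i l, 0 ≤ M i l) {x y : ι → ℝ} (hxy : x ≤ y) : M *ᵥ x ≤ M *ᵥ y :=
  fun i => sum_le_sum fun l _ => mul_le_mul_of_nonneg_left (hxy l) (hM i l)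

/-- Discrete Grönwall inequality for a linear recursion with nonnegative matrices. -/
theorem le_sum_backProd_mulVec {m : ℕ} (Q : ℕ → Matrix (Fin m) (Fin m) ℝ) (δ b : ℕ → Fin m → ℝ)
    (T : ℕ) (hQ : ∀ t, 1 ≤ t → t ≤ T → ∀ i l, 0 ≤ Q t i l) (hδ₁ : δ 1 ≤ 0)
    (hstep : ∀ t, 1 ≤ t → t ≤ T → δ (t + 1) ≤ Q t *ᵥ δ t + b t) :
    ∀ u ≤ T, δ (u + 1) ≤ ∑ s ∈ Icc 1 u, backProd Q u s *ᵥ b s := by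
  intro u
  induction u with
  | zero => simpa using hδ₁
  | succ u ih =>
    intro hu
    have hsucc : ∀ s ∈ Icc 1 u, Q (u + 1) *ᵥ (backProd Q u s *ᵥ b s) =
        backProd Q (u + 1) s *ᵥ b s := fun s hs => by
      rw [mulVec_mulVec, backProd_succ Q (mem_Icc.mp hs).2]
    calc δ (u + 1 + 1)
        ≤ Q (u + 1) *ᵥ δ (u + 1) + b (u + 1) := hstep (u + 1) (by omega) hu
      _ ≤ Q (u + 1) *ᵥ (∑ s ∈ Icc 1 u, backProd Q u s *ᵥ b s) + b (u + 1) := by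
          gcongr
          exact mulVec_mono_of_nonneg (hQ (u + 1) (by omega) hu) (ih (by omega))
      _ = ∑ s ∈ Icc 1 (u + 1), backProd Q (u + 1) s *ᵥ b s := by
          rw [mulVec_sum, sum_congr rfl hsucc, sum_Icc_succ_top (by omega), backProd_self,
            one_mulVec]

lemma norm_gossip_sub_le {ι H : Type*} [Fintype ι] [NormedAddCommGroup H] [NormedSpace ℝ H]
    {p : ι → ℝ} (hp : ∀ l, 0 ≤ p l) {η : ℝ} (hη : 0 ≤ η) (x y : ι → H) (g g' : H) :
    ‖(∑ l, p l • x l - η • g) - (∑ l, p l • y l - η • g')‖ ≤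
      ∑ l, p l * ‖x l - y l‖ + η * ‖g - g'‖ := by
  have hsplit : (∑ l, p l • x l - η • g) - (∑ l, p l • y l - η • g') =
      ∑ l, p l • (x l - y l) - η • (g - g') := by
    simp only [smul_sub, sum_sub_distrib]
    abel
  rw [hsplit]
  refine (norm_sub_le _ _).trans (add_le_add ((norm_sum_le _ _).trans ?_) ?_)
  · exact (sum_congr rfl fun l _ => by rw [norm_smul, Real.norm_of_nonneg (hp l)]).le
  · rw [norm_smul, Real.norm_of_nonneg hη]

open Classical in
lemma norm_sub_le_of_smooth_of_norm_le {Z H : Type*} [NormedAddCommGroup H] {f' : Z → H → H}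
    {L β : ℝ} (hgradbd : ∀ z x, ‖f' z x‖ ≤ L) (hsmooth : ∀ z x y, ‖f' z x - f' z y‖ ≤ β * ‖x - y‖)
    (z z' : Z) (x y : H) :
    ‖f' z x - f' z' y‖ ≤ β * ‖x - y‖ + if z' = z then 0 else 2 * L := by
  split_ifs with hz
  · simpa [hz] using hsmooth z x y
  · have hβ : 0 ≤ β * ‖x - y‖ := (norm_nonneg _).trans (hsmooth z x y)
    linarith [norm_sub_le (f' z x) (f' z' y), hgradbd z x, hgradbd z' y]

noncomputable def dsgdStep {m n : ℕ} {Z H : Type*} [AddCommGroup H] [Module ℝ H]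
    (f' : Z → H → H) (P : Matrix (Fin m) (Fin m) ℝ) (η : ℝ) (S : Fin m → Fin n → Z)
    (jt : Fin m → Fin n) (x : Fin m → H) : Fin m → H :=
  fun i => ∑ l, P i l • x l - η • f' (S i (jt i)) (x i)

section dsgdStep

variable {m n : ℕ} {Z H : Type*} [NormedAddCommGroup H] {f' : Z → H → H}
  {L β : ℝ} {r : Fin m} {k : Fin n} {S S' : Fin m → Fin n → Z}

lemma norm_grad_sub_le_add_single (hL : 0 ≤ L) (hgradbd : ∀ z x, ‖f' z x‖ ≤ L)
    (hsmooth : ∀ z x y, ‖f' z x - f' z y‖ ≤ β * ‖x - y‖)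
    (hSS' : ∀ r' k', (r', k') ≠ (r, k) → S' r' k' = S r' k') (jt : Fin m → Fin n)
    (x y : Fin m → H) (i : Fin m) :
    ‖f' (S i (jt i)) (x i) - f' (S' i (jt i)) (y i)‖ ≤
      β * ‖x i - y i‖ + (Pi.single r (2 * L * if jt r = k then 1 else 0) : Fin m → ℝ) i := by
  classical
  refine (norm_sub_le_of_smooth_of_norm_le hgradbd hsmooth _ _ _ _).trans (add_le_add le_rfl ?_)
  by_cases hik : i = r ∧ jt i = k
  · obtain ⟨rfl, hjt⟩ := hik
    split_ifs <;> simp [hL]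
  · have hsame : S' i (jt i) = S i (jt i) := hSS' i (jt i) fun h => hik (Prod.mk.inj h)
    rw [if_pos hsame]
    rcases eq_or_ne i r with rfl | hir
    · simp [show jt i ≠ k from fun h => hik ⟨rfl, h⟩]
    · simp [hir]

lemma norm_dsgdStep_sub_le [NormedSpace ℝ H] (hL : 0 ≤ L) (hgradbd : ∀ z x, ‖f' z x‖ ≤ L)
    (hsmooth : ∀ z x y, ‖f' z x - f' z y‖ ≤ β * ‖x - y‖)
    (hSS' : ∀ r' k', (r', k') ≠ (r, k) → S' r' k' = S r' k')
    {P : Matrix (Fin m) (Fin m) ℝ} (hP : ∀ i l, 0 ≤ P i l) {η : ℝ} (hη : 0 ≤ η)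
    (jt : Fin m → Fin n) (x y : Fin m → H) :
    (fun i => ‖dsgdStep f' P η S jt x i - dsgdStep f' P η S' jt y i‖) ≤
      (P + (η * β) • 1) *ᵥ (fun i => ‖x i - y i‖) +
        Pi.single r (2 * L * η * if jt r = k then 1 else 0) := by
  intro i
  calc ‖dsgdStep f' P η S jt x i - dsgdStep f' P η S' jt y i‖
      ≤ ∑ l, P i l * ‖x l - y l‖ +
          η * ‖f' (S i (jt i)) (x i) - f' (S' i (jt i)) (y i)‖ :=
        norm_gossip_sub_le (hP i) hη x y _ _
    _ ≤ ∑ l, P i l * ‖x l - y l‖ + η * (β * ‖x i - y i‖ +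
          (Pi.single r (2 * L * if jt r = k then 1 else 0) : Fin m → ℝ) i) := by
        gcongr
        exact norm_grad_sub_le_add_single hL hgradbd hsmooth hSS' jt x y i
    _ = _ := by
        simp only [Pi.add_apply, add_mulVec, smul_mulVec, one_mulVec, Pi.smul_apply, smul_eq_mul]
        rcases eq_or_ne i r with rfl | hir
        · simp only [Pi.single_eq_same]
          split_ifs <;> simp [mulVec, dotProduct] <;> ring
        · simp [mulVec, dotProduct, hir]
          ring

end dsgdStep

theorem dsgd_local_stability_nonconvex_general
    {H : Type*} [NormedAddCommGroup H] [InnerProductSpace ℝ H]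
    {Z : Type*} (f : Z → H → ℝ) (f' : Z → H → H)
    (L β : ℝ) (hL : 0 < L) (hβ : 0 < β)
    (hlip : ∀ (z : Z) (x y : H), |f z x - f z y| ≤ L * ‖x - y‖)
    (hgradbd : ∀ (z : Z) (x : H), ‖f' z x‖ ≤ L)
    (hsmooth : ∀ (z : Z) (x y : H), ‖f' z x - f' z y‖ ≤ β * ‖x - y‖)
    (m n T : ℕ)
    (P : ℕ → Matrix (Fin m) (Fin m) ℝ)
    (hPpos : ∀ t, 1 ≤ t → t ≤ T → ∀ i l, 0 ≤ P t i l)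
    (r : Fin m) (k : Fin n)
    (S S' : Fin m → Fin n → Z)
    (hSS' : ∀ (r' : Fin m) (k' : Fin n), (r', k') ≠ (r, k) → S' r' k' = S r' k')
    (j : ℕ → Fin m → Fin n)
    (η : ℕ → ℝ) (hηpos : ∀ t, 1 ≤ t → t ≤ T → 0 < η t)
    (w₀ : H) (w v : ℕ → Fin m → H)
    (hw1 : ∀ i, w 1 i = w₀) (hv1 : ∀ i, v 1 i = w₀)
    (hwrec : ∀ t, 1 ≤ t → t ≤ T → ∀ i,
      w (t + 1) i = ∑ l, P t i l • w t l - η t • f' (S i (j t i)) (w t i))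
    (hvrec : ∀ t, 1 ≤ t → t ≤ T → ∀ i,
      v (t + 1) i = ∑ l, P t i l • v t l - η t • f' (S' i (j t i)) (v t i))
    :
    ∀ z : Z,
      |f z (w (T + 1) r) - f z (v (T + 1) r)| ≤
        2 * L ^ 2 * ∑ t ∈ Finset.Icc 1 T, (backProd (fun s => P s + (η s * β) • (1 : Matrix (Fin m) (Fin m) ℝ)) T t) r r * η t * (if j t r = k then (1 : ℝ) else 0) := by
  intro z
  set Q : ℕ → Matrix (Fin m) (Fin m) ℝ := fun s => P s + (η s * β) • 1
  have hQ : ∀ t, 1 ≤ t → t ≤ T → ∀ i l, 0 ≤ Q t i l := fun t h1 h2 i l =>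
    add_nonneg (hPpos t h1 h2 i l)
      (mul_nonneg (mul_nonneg (hηpos t h1 h2).le hβ.le) (zero_le_one_elem i l))
  set δ : ℕ → Fin m → ℝ := fun t i => ‖w t i - v t i‖
  set b : ℕ → Fin m → ℝ := fun t => Pi.single r (2 * L * η t * if j t r = k then 1 else 0)
  have hstep : ∀ t, 1 ≤ t → t ≤ T → δ (t + 1) ≤ Q t *ᵥ δ t + b t := fun t h1 h2 => by
    have hw : w (t + 1) = dsgdStep f' (P t) (η t) S (j t) (w t) := funext (hwrec t h1 h2)
    have hv : v (t + 1) = dsgdStep f' (P t) (η t) S' (j t) (v t) := funext (hvrec t h1 h2)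
    have h := norm_dsgdStep_sub_le hL.le hgradbd hsmooth hSS' (hPpos t h1 h2) (hηpos t h1 h2).le
      (j t) (w t) (v t)
    rwa [← hw, ← hv] at h
  have hδ := le_sum_backProd_mulVec Q _ _ T hQ (fun i => by simp [δ, hw1, hv1]) hstep T le_rfl r
  calc |f z (w (T + 1) r) - f z (v (T + 1) r)| ≤ L * ‖w (T + 1) r - v (T + 1) r‖ := hlip z _ _
    _ ≤ L * ∑ t ∈ Icc 1 T, backProd Q T t r r * (2 * L * η t * if j t r = k then 1 else 0) := by
        gcongr
        simpa [δ, b, Finset.sum_apply, ite_apply, mul_comm] using hδ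
    _ = _ := by
        rw [mul_sum, mul_sum]
        exact sum_congr rfl fun t _ => by ring

/-- local model, non-convex case, time-varying gossip matrices. -/
theorem dsgd_local_stability_nonconvex
    {H : Type*} [NormedAddCommGroup H] [InnerProductSpace ℝ H]
    {Z : Type*} (f : Z → H → ℝ) (f' : Z → H → H)
    (L β : ℝ) (hL : 0 < L) (hβ : 0 < β)
    (hdiff : ∀ (z : Z) (x : H), HasFDerivAt (f z) ((innerSL ℝ) (f' z x)) x)
    (hlip : ∀ (z : Z) (x y : H), |f z x - f z y| ≤ L * ‖x - y‖)
    (hgradbd : ∀ (z : Z) (x : H), ‖f' z x‖ ≤ L)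
    (hsmooth : ∀ (z : Z) (x y : H), ‖f' z x - f' z y‖ ≤ β * ‖x - y‖)
    (m n T : ℕ) (hm : 1 ≤ m) (hn : 1 ≤ n) (hT : 1 ≤ T)
    (P : ℕ → Matrix (Fin m) (Fin m) ℝ)
    (hPsym : ∀ t, 1 ≤ t → t ≤ T → ∀ i l, P t i l = P t l i)
    (hPpos : ∀ t, 1 ≤ t → t ≤ T → ∀ i l, 0 ≤ P t i l)
    (hProw : ∀ t, 1 ≤ t → t ≤ T → ∀ i, ∑ l, P t i l = 1)
    (r : Fin m) (k : Fin n)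
    (S S' : Fin m → Fin n → Z)
    (hSS' : ∀ (r' : Fin m) (k' : Fin n), (r', k') ≠ (r, k) → S' r' k' = S r' k')
    (j : ℕ → Fin m → Fin n)
    (η : ℕ → ℝ) (hηpos : ∀ t, 1 ≤ t → t ≤ T → 0 < η t)
    (w₀ : H) (w v : ℕ → Fin m → H)
    (hw1 : ∀ i, w 1 i = w₀) (hv1 : ∀ i, v 1 i = w₀)
    (hwrec : ∀ t, 1 ≤ t → t ≤ T → ∀ i,
      w (t + 1) i = ∑ l, P t i l • w t l - η t • f' (S i (j t i)) (w t i))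
    (hvrec : ∀ t, 1 ≤ t → t ≤ T → ∀ i,
      v (t + 1) i = ∑ l, P t i l • v t l - η t • f' (S' i (j t i)) (v t i))
    :
    ∀ z : Z,
      |f z (w (T + 1) r) - f z (v (T + 1) r)| ≤
        2 * L ^ 2 * ∑ t ∈ Finset.Icc 1 T, (backProd (fun s => P s + (η s * β) • (1 : Matrix (Fin m) (Fin m) ℝ)) T t) r r * η t * (if j t r = k then (1 : ℝ) else 0) :=
  dsgd_local_stability_nonconvex_general f f' L β hL hβ hlip hgradbd hsmooth m n T P hPpos r k S S'
    hSS' j η hηpos w₀ w v hw1 hv1 hwrec hvrec
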